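/- Let A(x) = Σ aₙ xⁿ and B(x) = Σ bₙ xⁿ be power series convergent for |x| < R, with bₙ > 0 for all n. If the sequence aₙ/bₙ is strictly increasing, then the function A(x)/B(x) is strictly increasing on (0, R). -/

import Mathlib

/-!
For `0 < x < y < R`, the claim `A x / B x < A y / B y` is `0 < A y * B x - A x * B y`. Expanding the
products as a double series and pairing the `(m, n)` term with the `(n, m)` term gives the terms
`(aₘ bₙ - aₙ bₘ) (yᵐ xⁿ - yⁿ xᵐ)`. Both factors have the sign of `n - m`, because `aₙ / bₙ` and
`yⁿ / xⁿ` are strictly increasing, so every paired term is nonnegative and the one for `{0, 1}` is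
positive.
-/

open Set Filter Topology

lemma summable_norm_mul_pow_of_tendsto {𝕜 : Type*} [NontriviallyNormedField 𝕜] {a : ℕ → 𝕜}
    {r x : 𝕜} (ha : Tendsto (fun n => a n * r ^ n) atTop (𝓝 0)) (hx : ‖x‖ < ‖r‖) :
    Summable fun n => ‖a n * x ^ n‖ := by
  set p := FormalMultilinearSeries.ofScalars 𝕜 a
  have hr : (‖r‖₊ : ENNReal) ≤ p.radius :=
    p.le_radius_of_tendsto (l := 0) (by simpa [p, norm_mul, norm_pow] using ha.norm)
  have hxr : (‖x‖₊ : ENNReal) < p.radius := lt_of_lt_of_le (by exact_mod_cast hx) hr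
  simpa [p, norm_mul, norm_pow] using p.summable_norm_mul_pow hxr

lemma summable_norm_mul_pow_of_forall_abs_lt {a : ℕ → ℝ} {R x : ℝ}
    (ha : ∀ z : ℝ, |z| < R → Summable fun n => a n * z ^ n) (hx : |x| < R) :
    Summable fun n => ‖a n * x ^ n‖ := by
  obtain ⟨r, hxr, hrR⟩ := exists_between hx
  have hr : |r| = r := abs_of_nonneg ((abs_nonneg x).trans hxr.le)
  refine summable_norm_mul_pow_of_tendsto (ha r (by rwa [hr])).tendsto_atTop_zero ?_
  rwa [Real.norm_eq_abs, Real.norm_eq_abs, hr]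

lemma tsum_mul_tsum_sub_tsum_mul_tsum {ι ι' R : Type*} [NormedRing R] [CompleteSpace R]
    {f f' : ι → R} {g g' : ι' → R} (hf : Summable fun i => ‖f i‖) (hg : Summable fun j => ‖g j‖)
    (hf' : Summable fun i => ‖f' i‖) (hg' : Summable fun j => ‖g' j‖) :
    (∑' i, f i) * (∑' j, g j) - (∑' i, f' i) * (∑' j, g' j) =
      ∑' p : ι × ι', (f p.1 * g p.2 - f' p.1 * g' p.2) := by
  rw [tsum_mul_tsum_of_summable_norm hf hg, tsum_mul_tsum_of_summable_norm hf' hg',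
    (summable_mul_of_summable_norm hf hg).tsum_sub (summable_mul_of_summable_norm hf' hg')]

lemma tsum_pos_of_add_swap_pos {α : Type*} {f : α × α → ℝ} (hf : Summable f)
    (h : ∀ p, 0 ≤ f p + f p.swap) {p₀ : α × α} (hp₀ : 0 < f p₀ + f p₀.swap) :
    0 < ∑' p, f p := by
  have hswap : ∑' p : α × α, f p.swap = ∑' p, f p := (Equiv.prodComm α α).tsum_eq f
  have hpos := (hf.add hf.prod_symm).tsum_pos h p₀ hp₀
  rw [hf.tsum_add hf.prod_symm, hswap] at hpos
  linarith

section CrossProducts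

variable {ι : Type*} {a b : ι → ℝ}

lemma mul_lt_mul_of_strictMono_div [Preorder ι] (hb : ∀ i, 0 < b i)
    (hab : StrictMono fun i => a i / b i) {i j : ι} (hij : i < j) :
    a i * b j < a j * b i :=
  (div_lt_div_iff₀ (hb i) (hb j)).1 (hab hij)

lemma cross_sub_mul_cross_sub_pos [LinearOrder ι] {c d : ι → ℝ} (hb : ∀ i, 0 < b i)
    (hd : ∀ i, 0 < d i) (hab : StrictMono fun i => a i / b i)
    (hcd : StrictMono fun i => c i / d i) {i j : ι} (hij : i ≠ j) :
    0 < (a i * b j - a j * b i) * (c i * d j - c j * d i) := by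
  rcases hij.lt_or_gt with hlt | hgt
  · exact mul_pos_of_neg_of_neg (by linarith [mul_lt_mul_of_strictMono_div hb hab hlt])
      (by linarith [mul_lt_mul_of_strictMono_div hd hcd hlt])
  · exact mul_pos (by linarith [mul_lt_mul_of_strictMono_div hb hab hgt])
      (by linarith [mul_lt_mul_of_strictMono_div hd hcd hgt])

end CrossProducts

lemma strictMono_pow_div_pow {x y : ℝ} (hx : 0 < x) (hxy : x < y) :
    StrictMono fun n : ℕ => y ^ n / x ^ n := by
  simpa only [div_pow] using pow_right_strictMono₀ ((one_lt_div hx).2 hxy)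

theorem power_series_ratio_strict_mono (a b : ℕ → ℝ) (R : ℝ)
    (hA : ∀ x : ℝ, |x| < R → Summable (fun n => a n * x ^ n))
    (hB : ∀ x : ℝ, |x| < R → Summable (fun n => b n * x ^ n))
    (hb : ∀ n, 0 < b n)
    (hratio : StrictMono (fun n => a n / b n)) :
    StrictMonoOn (fun x => (∑' n, a n * x ^ n) / (∑' n, b n * x ^ n)) (Ioo 0 R) := by
  intro x ⟨hx0, hxR⟩ y ⟨hy0, hyR⟩ hxy
  have hxR' : |x| < R := by rwa [abs_of_pos hx0]
  have hyR' : |y| < R := by rwa [abs_of_pos hy0]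
  have hB_pos : ∀ z, 0 < z → |z| < R → 0 < ∑' n, b n * z ^ n := fun z hz hzR =>
    (hB z hzR).tsum_pos (fun n => (mul_pos (hb n) (pow_pos hz n)).le) 0 (by simpa using hb 0)
  have hpairs : ∀ m n : ℕ,
      (a m * y ^ m * (b n * x ^ n) - a m * x ^ m * (b n * y ^ n)) +
        (a n * y ^ n * (b m * x ^ m) - a n * x ^ n * (b m * y ^ m)) =
      (a m * b n - a n * b m) * (y ^ m * x ^ n - y ^ n * x ^ m) := fun m n => by ring
  have hpair_pos : ∀ m n : ℕ, m ≠ n →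
      0 < (a m * b n - a n * b m) * (y ^ m * x ^ n - y ^ n * x ^ m) := fun m n hmn =>
    cross_sub_mul_cross_sub_pos hb (fun n => pow_pos hx0 n) hratio
      (strictMono_pow_div_pow hx0 hxy) hmn
  have hAx := summable_norm_mul_pow_of_forall_abs_lt hA hxR'
  have hAy := summable_norm_mul_pow_of_forall_abs_lt hA hyR'
  have hBx := summable_norm_mul_pow_of_forall_abs_lt hB hxR'
  have hBy := summable_norm_mul_pow_of_forall_abs_lt hB hyR'
  rw [div_lt_div_iff₀ (hB_pos x hx0 hxR') (hB_pos y hy0 hyR'), ← sub_pos,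
    tsum_mul_tsum_sub_tsum_mul_tsum hAy hBx hAx hBy]
  refine tsum_pos_of_add_swap_pos
    ((summable_mul_of_summable_norm hAy hBx).sub (summable_mul_of_summable_norm hAx hBy))
    (fun ⟨m, n⟩ => ?_) (p₀ := (0, 1)) ((hpairs 0 1).symm ▸ hpair_pos 0 1 zero_ne_one)
  rw [Prod.swap_prod_mk, hpairs]
  rcases eq_or_ne m n with rfl | hmn
  · simp
  · exact (hpair_pos m n hmn).le
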